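/- For any vertex α of BH_n, the vertices α and its shadow vertex α^s have exactly the same set of neighbors: N(α) = N(α^s). -/

import Mathlib

/-- `(-1)^{a}` in `ZMod 4`: `+1` if `a` is even, `-1` if `a` is odd. -/
def bhSign (a : ZMod 4) : ZMod 4 := if a.val % 2 = 0 then 1 else -1

/-- The move `α ↦ α^{i±}` in `BH_n`: for `i = 0`, change coordinate `0` by `ε = ±1`;
for `i ≠ 0`, change coordinate `0` by `ε = ±1` and coordinate `i` by `(-1)^{α_0}`. -/
def bhMove (n : ℕ) [NeZero n] (i : Fin n) (ε : ZMod 4) (α : Fin n → ZMod 4) :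
    Fin n → ZMod 4 :=
  if i = 0 then Function.update α 0 (α 0 + ε)
  else Function.update (Function.update α 0 (α 0 + ε)) i (α i + bhSign (α 0))

/-- `β` is one of the `2n` designated neighbours of `α` in `BH_n`. -/
def bhAdj (n : ℕ) [NeZero n] (α β : Fin n → ZMod 4) : Prop :=
  ∃ i : Fin n, ∃ ε : ZMod 4, (ε = 1 ∨ ε = -1) ∧ β = bhMove n i ε α

/-- The `n`-dimensional balanced hypercube as a simple graph. -/
def BH (n : ℕ) [NeZero n] : SimpleGraph (Fin n → ZMod 4) :=
  SimpleGraph.fromRel (bhAdj n)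

/-- The shadow vertex `α^s`: add `2 (mod 4)` to coordinate `0`. -/
def bhShadow (n : ℕ) [NeZero n] (α : Fin n → ZMod 4) : Fin n → ZMod 4 :=
  Function.update α 0 (α 0 + 2)

/- The shadow map only adds 2 to coordinate 0, and every move `α ↦ α^{i±}` depends on `α_0` only through
its parity. Hence shifting the start of a move by 2 is the same as shifting its direction `ε` by 2, and
`ε ↦ ε + 2` permutes `{1, -1}`; so `α` and `α^s` reach the same vertices in one move, and a vertex reaching
`α` in one move reaches `α^s` as well. By the same token an edge between `α` and `α^s`
would give a loop at `α^s`, so `α^s` is never a neighbour of `α`. -/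

lemma bhSign_add_two (a : ZMod 4) : bhSign (a + 2) = bhSign a := by
  revert a; decide

lemma add_two_add_two (a : ZMod 4) : a + 2 + 2 = a := by
  revert a; decide

lemma bhShadow_bhShadow (n : ℕ) [NeZero n] (α : Fin n → ZMod 4) :
    bhShadow n (bhShadow n α) = α := by
  simp [bhShadow, add_two_add_two]

lemma bhMove_apply_zero (n : ℕ) [NeZero n] (i : Fin n) (ε : ZMod 4) (α : Fin n → ZMod 4) :
    bhMove n i ε α 0 = α 0 + ε := by
  unfold bhMove
  split_ifs with hi
  · simp
  · rw [Function.update_of_ne (Ne.symm hi), Function.update_self]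

lemma bhMove_bhShadow (n : ℕ) [NeZero n] (i : Fin n) (ε : ZMod 4) (α : Fin n → ZMod 4) :
    bhMove n i ε (bhShadow n α) = bhMove n i (ε + 2) α := by
  have h0 : bhShadow n α 0 + ε = α 0 + (ε + 2) := by simp [bhShadow]; ring
  unfold bhMove
  split_ifs with hi
  · rw [h0, bhShadow, Function.update_idem]
  · rw [h0, bhShadow, Function.update_self, bhSign_add_two, Function.update_of_ne hi,
      Function.update_idem]

lemma bhShadow_bhMove (n : ℕ) [NeZero n] (i : Fin n) (ε : ZMod 4) (α : Fin n → ZMod 4) :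
    bhShadow n (bhMove n i ε α) = bhMove n i (ε + 2) α := by
  rw [bhShadow, bhMove_apply_zero, add_assoc]
  unfold bhMove
  split_ifs with hi
  · rw [Function.update_idem]
  · rw [Function.update_comm hi, Function.update_idem]

lemma bhMove_ne_self (n : ℕ) [NeZero n] (i : Fin n) {ε : ZMod 4} (hε : ε ≠ 0)
    (α : Fin n → ZMod 4) : bhMove n i ε α ≠ α := fun h => by
  have h0 := congrFun h 0
  rw [bhMove_apply_zero, add_eq_left] at h0
  exact hε h0

lemma add_two_eq_one_or_neg_one {ε : ZMod 4} (hε : ε = 1 ∨ ε = -1) :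
    ε + 2 = 1 ∨ ε + 2 = -1 := by
  rcases hε with rfl | rfl <;> decide

lemma bhAdj_bhShadow_left {n : ℕ} [NeZero n] {α β : Fin n → ZMod 4} (h : bhAdj n α β) :
    bhAdj n (bhShadow n α) β := by
  obtain ⟨i, ε, hε, rfl⟩ := h
  exact ⟨i, ε + 2, add_two_eq_one_or_neg_one hε, by rw [bhMove_bhShadow, add_two_add_two]⟩

lemma bhAdj_bhShadow_right {n : ℕ} [NeZero n] {α β : Fin n → ZMod 4} (h : bhAdj n β α) :
    bhAdj n β (bhShadow n α) := by
  obtain ⟨i, ε, hε, rfl⟩ := h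
  exact ⟨i, ε + 2, add_two_eq_one_or_neg_one hε, bhShadow_bhMove n i ε β⟩

lemma bhAdj_irrefl {n : ℕ} [NeZero n] (α : Fin n → ZMod 4) : ¬ bhAdj n α α := by
  rintro ⟨i, ε, hε, h⟩
  have hε0 : ε ≠ 0 := by rcases hε with rfl | rfl <;> decide
  exact bhMove_ne_self n i hε0 α h.symm

lemma bhShadow_ne_of_bhAdj {n : ℕ} [NeZero n] {α β : Fin n → ZMod 4}
    (h : bhAdj n α β ∨ bhAdj n β α) : bhShadow n α ≠ β := by
  rintro rfl
  rcases h with h | h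
  · exact bhAdj_irrefl _ (bhAdj_bhShadow_left h)
  · exact bhAdj_irrefl _ (bhAdj_bhShadow_right h)

lemma bh_adj_bhShadow {n : ℕ} [NeZero n] {α β : Fin n → ZMod 4} (h : (BH n).Adj α β) :
    (BH n).Adj (bhShadow n α) β := by
  rw [BH, SimpleGraph.fromRel_adj] at h ⊢
  obtain ⟨-, hαβ⟩ := h
  exact ⟨bhShadow_ne_of_bhAdj hαβ, hαβ.imp bhAdj_bhShadow_left bhAdj_bhShadow_right⟩

/-- A vertex `α` of `BH_n` and its shadow vertex `α^s` have exactly the same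
set of neighbours: `N(α) = N(α^s)`. -/
theorem bh_shadow_same_neighborhood (n : ℕ) [NeZero n] (α : Fin n → ZMod 4) :
    (BH n).neighborSet α = (BH n).neighborSet (bhShadow n α) := by
  ext β
  refine ⟨bh_adj_bhShadow, fun h => ?_⟩
  simpa only [SimpleGraph.mem_neighborSet, bhShadow_bhShadow] using bh_adj_bhShadow h
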